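/- arXiv:1111.1516 — 7 statements merged into one kernel-verified Lean document; each statement's English description precedes it below -/
import Mathlib

section
/- Let g : (0, δ) → ℝ be a bounded positive C¹ solution of r g'(r) − g(r)² ≥ 0 on a right neighborhood of 0. Then lim_{r→0⁺} g(r) = 0. -/
/-! The inequality says exactly that `r ↦ -1/g(r) - log r` is nondecreasing, so for `0 < a < b`
we get `1/g(a) ≥ 1/g(b) + log (b/a) > log (b/a)`, which tends to `+∞` as `a → 0⁺`. -/

open Filter Set Real Topology

lemma monotoneOn_neg_inv_sub_log {D : Set ℝ} (hD : Convex ℝ D) (hD0 : D ⊆ Ioi 0)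
    {g g' : ℝ → ℝ} (hderiv : ∀ r ∈ D, HasDerivAt g (g' r) r) (hpos : ∀ r ∈ D, 0 < g r)
    (hineq : ∀ r ∈ D, g r ^ 2 ≤ r * g' r) :
    MonotoneOn (fun r => -(g r)⁻¹ - log r) D := by
  have hφ : ∀ r ∈ D, HasDerivAt (fun r => -(g r)⁻¹ - log r) (g' r / g r ^ 2 - r⁻¹) r := by
    intro r hr
    have h := ((hderiv r hr).inv (hpos r hr).ne').neg.sub (hasDerivAt_log (hD0 hr).ne')
    rwa [neg_div, neg_neg] at h
  refine monotoneOn_of_hasDerivWithinAt_nonneg hD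
    (fun r hr => (hφ r hr).continuousAt.continuousWithinAt)
    (fun r hr => (hφ r (interior_subset hr)).hasDerivWithinAt) fun r hr => ?_
  have hr := interior_subset hr
  have hr0 : 0 < r := hD0 hr
  have hg2 : 0 < g r ^ 2 := pow_pos (hpos r hr) 2
  rw [sub_nonneg, le_div_iff₀ hg2, inv_mul_le_iff₀ hr0]
  exact hineq r hr

lemma le_inv_log_sub_log {D : Set ℝ} {g : ℝ → ℝ}
    (hmono : MonotoneOn (fun r => -(g r)⁻¹ - log r) D) (hpos : ∀ r ∈ D, 0 < g r)
    {a b : ℝ} (ha : a ∈ D) (hb : b ∈ D) (ha0 : 0 < a) (hab : a < b) :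
    g a ≤ (log b - log a)⁻¹ := by
  have hlog : 0 < log b - log a := sub_pos.mpr (log_lt_log ha0 hab)
  have hφ := hmono ha hb hab.le
  have hgb : 0 < (g b)⁻¹ := inv_pos.mpr (hpos b hb)
  have hinv : log b - log a ≤ (g a)⁻¹ := by
    simp only at hφ
    linarith
  simpa using inv_anti₀ hlog hinv

lemma tendsto_inv_log_sub_log_nhdsGT_zero (b : ℝ) :
    Tendsto (fun a => (log b - log a)⁻¹) (𝓝[>] 0) (𝓝 0) := by
  refine tendsto_inv_atTop_zero.comp ?_
  simpa only [sub_eq_add_neg, Function.comp_def] using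
    tendsto_atTop_add_const_left _ (log b) (tendsto_neg_atBot_atTop.comp tendsto_log_nhdsGT_zero)

theorem limit_zero_of_diff_ineq_general (δ : ℝ) (hδ : 0 < δ) (g g' : ℝ → ℝ)
    (hderiv : ∀ r ∈ Set.Ioo 0 δ, HasDerivAt g (g' r) r)
    (hpos : ∀ r ∈ Set.Ioo 0 δ, 0 < g r)
    (hineq : ∀ r ∈ Set.Ioo 0 δ, r * g' r - g r ^ 2 ≥ 0) :
    Filter.Tendsto g (nhdsWithin 0 (Set.Ioi 0)) (nhds 0) := by
  have hmono := monotoneOn_neg_inv_sub_log (convex_Ioo 0 δ) Ioo_subset_Ioi_self hderiv hpos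
    fun r hr => sub_nonneg.mp (hineq r hr)
  have hb : δ / 2 ∈ Ioo 0 δ := ⟨half_pos hδ, half_lt_self hδ⟩
  refine squeeze_zero' ?_ ?_ (tendsto_inv_log_sub_log_nhdsGT_zero (δ / 2))
  · filter_upwards [Ioo_mem_nhdsGT hδ] with a ha
    exact (hpos a ha).le
  · filter_upwards [Ioo_mem_nhdsGT hb.1] with a ha
    exact le_inv_log_sub_log hmono hpos ⟨ha.1, ha.2.trans hb.2⟩ hb ha.1 ha.2

/-- Any bounded positive C¹ solution of r g' - g² ≥ 0 near 0⁺ tends to 0. -/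
theorem limit_zero_of_diff_ineq (δ : ℝ) (hδ : 0 < δ) (g g' : ℝ → ℝ)
    (hderiv : ∀ r ∈ Set.Ioo 0 δ, HasDerivAt g (g' r) r)
    (hcont : ContinuousOn g' (Set.Ioo 0 δ))
    (hpos : ∀ r ∈ Set.Ioo 0 δ, 0 < g r)
    (hbdd : ∃ M : ℝ, ∀ r ∈ Set.Ioo 0 δ, g r ≤ M)
    (hineq : ∀ r ∈ Set.Ioo 0 δ, r * g' r - g r ^ 2 ≥ 0) :
    Filter.Tendsto g (nhdsWithin 0 (Set.Ioi 0)) (nhds 0) :=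
  limit_zero_of_diff_ineq_general δ hδ g g' hderiv hpos hineq
end

section
/- Let h : (s₀, ∞) → ℝ be C¹ and suppose that −h'(s) + h(s) − h(s)² converges to ℓ₁/4 as s → ∞ for some ℓ₁ ∈ [0, ∞]. Then ℓ₁ ≤ 1. -/
/-!
If `ℓ > 1`, then eventually `u = h - 1/2` satisfies the Riccati inequality `u' ≤ -(u² + ε)` for
some `ε > 0`. Then `(arctan u)' ≤ -min ε 1`, so the bounded function `arctan u` would drop by
more than `π` on a half-line: Riccati solutions blow up in finite time.
-/

open Set Filter Real

theorem image_le_sub_mul_of_hasDerivAt_le {f f' : ℝ → ℝ} {a k : ℝ}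
    (hf : ∀ x ∈ Ici a, HasDerivAt f (f' x) x) (hf' : ∀ x ∈ Ici a, f' x ≤ -k)
    {y : ℝ} (hy : a ≤ y) : f y ≤ f a - k * (y - a) := by
  have hderiv : ∀ x ∈ Ici a, HasDerivAt (fun x => f x + k * x) (f' x + k) x := by
    intro x hx
    simpa using (hf x hx).fun_add ((hasDerivAt_id x).const_mul k)
  have hanti : AntitoneOn (fun x => f x + k * x) (Ici a) := by
    refine antitoneOn_of_hasDerivWithinAt_nonpos (convex_Ici a)
      (fun x hx => (hderiv x hx).continuousAt.continuousWithinAt)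
      (fun x hx => (hderiv x (interior_subset hx)).hasDerivWithinAt) fun x hx => ?_
    linarith [hf' x (interior_subset hx)]
  linarith [hanti self_mem_Ici hy hy]

theorem one_div_one_add_sq_mul_le_neg_min {x v ε : ℝ} (hv : v ≤ -(x ^ 2 + ε)) :
    1 / (1 + x ^ 2) * v ≤ -min ε 1 := by
  have hpos : 0 < 1 + x ^ 2 := by positivity
  rw [one_div_mul_eq_div, div_le_iff₀ hpos]
  nlinarith [min_le_left ε 1, min_le_right ε 1, sq_nonneg x]

theorem not_eventually_hasDerivAt_le_neg_sq_sub {u u' : ℝ → ℝ} {ε : ℝ} (hε : 0 < ε) :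
    ¬∀ᶠ s in atTop, HasDerivAt u (u' s) s ∧ u' s ≤ -(u s ^ 2 + ε) := by
  intro hu
  obtain ⟨a, ha⟩ := eventually_atTop.mp hu
  set m := min ε 1
  have hm : 0 < m := lt_min hε one_pos
  have hdecay := image_le_sub_mul_of_hasDerivAt_le (f := fun s => arctan (u s)) (k := m)
    (fun s hs => (ha s hs).1.arctan)
    (fun s hs => one_div_one_add_sq_mul_le_neg_min (ha s hs).2)
    (le_add_of_nonneg_right (div_pos pi_pos hm).le : a ≤ a + π / m)
  have hπ : m * (a + π / m - a) = π := by field_simp; ring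
  linarith [arctan_lt_pi_div_two (u a), neg_pi_div_two_lt_arctan (u (a + π / m))]

theorem limit_le_one_step2_general (s₀ : ℝ) (h h' : ℝ → ℝ)
    (hderiv : ∀ s ∈ Set.Ioi s₀, HasDerivAt h (h' s) s)
    (ℓ : EReal)
    (hlim : Filter.Tendsto (fun s => ((4 * (-h' s + h s - h s ^ 2) : ℝ) : EReal))
      Filter.atTop (nhds ℓ)) :
    ℓ ≤ 1 := by
  by_contra! hℓ
  obtain ⟨c, hc1, hcℓ⟩ := EReal.lt_iff_exists_real_btwn.mp hℓ
  replace hc1 : (1 : ℝ) < c := mod_cast hc1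
  refine not_eventually_hasDerivAt_le_neg_sq_sub (u := fun s => h s - 1 / 2) (u' := h')
    (ε := (c - 1) / 4) (by linarith) ?_
  filter_upwards [hlim.eventually_const_lt hcℓ, eventually_gt_atTop s₀] with s hs hs₀
  have hs : c < 4 * (-h' s + h s - h s ^ 2) := mod_cast hs
  exact ⟨(hderiv s hs₀).sub_const _, by linarith⟩

/-- If -h' + h - h² converges to ℓ₁/4 (with ℓ₁ ∈ [0,∞], i.e. ℓ₁ = 4·lim in EReal),
then ℓ₁ ≤ 1. -/
theorem limit_le_one_step2 (s₀ : ℝ) (h h' : ℝ → ℝ)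
    (hderiv : ∀ s ∈ Set.Ioi s₀, HasDerivAt h (h' s) s)
    (hcont : ContinuousOn h' (Set.Ioi s₀))
    (ℓ : EReal) (hℓ : 0 ≤ ℓ)
    (hlim : Filter.Tendsto (fun s => ((4 * (-h' s + h s - h s ^ 2) : ℝ) : EReal))
      Filter.atTop (nhds ℓ)) :
    ℓ ≤ 1 :=
  limit_le_one_step2_general s₀ h h' hderiv ℓ hlim
end

section
/- Let H : (s₀, ∞) → ℝ be C¹ and suppose that H'(s) + H(s) − H(s)² converges to ℓ/4 as s → ∞ for some ℓ ∈ [0, ∞]. Then ℓ ≤ 1. -/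
/-!
Suppose `ℓ > 1`, and fix `1 < r < ℓ`. Eventually `4 (H' + H - H²) > r`, i.e. `G = H - 1/2` satisfies
the Riccati inequality `G' ≥ G² + ε` with `ε = (r - 1)/4 > 0`. Like `√ε tan (√ε s)`, such a `G`
blows up in time at most `π / √ε`: the function `arctan (G / √ε)` grows at rate at least `√ε`
but stays in `(-π/2, π/2)`.
-/

open Real Set Filter

lemma monotoneOn_Ici_of_hasDerivAt_nonneg {f f' : ℝ → ℝ} {a : ℝ}
    (hf : ∀ s ∈ Ici a, HasDerivAt f (f' s) s) (hf' : ∀ s ∈ Ici a, 0 ≤ f' s) :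
    MonotoneOn f (Ici a) := by
  refine monotoneOn_of_hasDerivWithinAt_nonneg (f' := f') (convex_Ici a)
    (fun s hs => (hf s hs).continuousAt.continuousWithinAt) (fun s hs => ?_) (fun s hs => ?_)
  · rw [interior_Ici] at hs
    exact (hf s (Ioi_subset_Ici_self hs)).hasDerivWithinAt
  · rw [interior_Ici] at hs
    exact hf' s (Ioi_subset_Ici_self hs)

lemma not_forall_sq_add_le_deriv {G G' : ℝ → ℝ} {a ε : ℝ} (hε : 0 < ε)
    (hG : ∀ s ∈ Ici a, HasDerivAt G (G' s) s) :
    ¬ ∀ s ∈ Ici a, G s ^ 2 + ε ≤ G' s := by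
  intro hric
  set c := √ε
  have hc : 0 < c := sqrt_pos.mpr hε
  have hc2 : c ^ 2 = ε := sq_sqrt hε.le
  have hderiv : ∀ s ∈ Ici a, HasDerivAt (fun x => arctan (G x / c) - c * x)
      (c * G' s / (c ^ 2 + G s ^ 2) - c) s := by
    intro s hs
    refine (((hG s hs).div_const c).arctan.sub ((hasDerivAt_id' s).const_mul c)).congr_deriv ?_
    field_simp
  have hmono := monotoneOn_Ici_of_hasDerivAt_nonneg hderiv fun s hs => by
    have hpos : 0 < c ^ 2 + G s ^ 2 := by positivity
    rw [sub_nonneg, le_div_iff₀ hpos]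
    nlinarith [hric s hs]
  have hend : a ≤ a + π / c := le_add_of_nonneg_right (by positivity)
  have hgrowth := hmono self_mem_Ici hend hend
  have hπ : c * (a + π / c) = c * a + π := by field_simp
  simp only [hπ] at hgrowth
  linarith [arctan_lt_pi_div_two (G (a + π / c) / c), neg_pi_div_two_lt_arctan (G a / c)]

theorem limit_le_one_gaussian_general (s₀ : ℝ) (H H' : ℝ → ℝ)
    (hderiv : ∀ s ∈ Set.Ioi s₀, HasDerivAt H (H' s) s)
    (ℓ : EReal)
    (hlim : Filter.Tendsto (fun s => ((4 * (H' s + H s - H s ^ 2) : ℝ) : EReal))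
      Filter.atTop (nhds ℓ)) :
    ℓ ≤ 1 := by
  by_contra! hℓ
  obtain ⟨r, hr1, hrℓ⟩ := EReal.exists_between_coe_real hℓ
  have hr : 1 < r := mod_cast hr1
  obtain ⟨a, ha⟩ := eventually_atTop.mp
    ((hlim.eventually_const_lt hrℓ).and (eventually_gt_atTop s₀))
  refine not_forall_sq_add_le_deriv (G := fun s => H s - 1 / 2) (a := a)
    (by linarith : 0 < (r - 1) / 4) (fun s hs => (hderiv s (ha s hs).2).sub_const _) ?_
  intro s hs
  have hQ : r < 4 * (H' s + H s - H s ^ 2) := mod_cast (ha s hs).1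
  nlinarith

/-- If H' + H - H² converges to ℓ/4 (with ℓ ∈ [0,∞], i.e. ℓ = 4·lim in EReal),
then ℓ ≤ 1. -/
theorem limit_le_one_gaussian (s₀ : ℝ) (H H' : ℝ → ℝ)
    (hderiv : ∀ s ∈ Set.Ioi s₀, HasDerivAt H (H' s) s)
    (hcont : ContinuousOn H' (Set.Ioi s₀))
    (ℓ : EReal) (hℓ : 0 ≤ ℓ)
    (hlim : Filter.Tendsto (fun s => ((4 * (H' s + H s - H s ^ 2) : ℝ) : EReal))
      Filter.atTop (nhds ℓ)) :
    ℓ ≤ 1 :=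
  limit_le_one_gaussian_general s₀ H H' hderiv ℓ hlim
end

section
/- Define X₁(r) = (a − log r)⁻¹ for r ∈ (0, δ), a ≥ 1. Suppose g is C¹ on (0, δ) and define h_{k+1} implicitly by h_k(r) = t (h_{k+1}(t) + 1/2) with t = X₁(r), h₁ = g. Then (r h_k'(r) − h_k(r)²)/t² − 1/4 = t h_{k+1}'(t) − h_{k+1}(t)². -/
open Real

/-- The change of variables `h_k(r) = t (h_{k+1}(t) + 1/2)` with `r = exp (a - 1/t)`,
i.e. `t = (a - log r)⁻¹`. -/
noncomputable def hardyNext (a : ℝ) (h : ℝ → ℝ) (t : ℝ) : ℝ :=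
  h (exp (a - 1 / t)) / t - 1 / 2

lemma exp_sub_one_div_inv_sub_log (a : ℝ) {r : ℝ} (hr : 0 < r) :
    exp (a - 1 / (a - log r)⁻¹) = r := by
  rw [one_div, inv_inv, sub_sub_cancel, exp_log hr]

lemma hasDerivAt_exp_sub_one_div (a : ℝ) {t : ℝ} (ht : t ≠ 0) :
    HasDerivAt (fun s => exp (a - 1 / s)) (exp (a - 1 / t) / t ^ 2) t := by
  have hinner : HasDerivAt (fun s : ℝ => a - 1 / s) (1 / t ^ 2) t := by
    simpa [one_div, sub_eq_add_neg] using (hasDerivAt_inv ht).const_sub a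
  exact ((hasDerivAt_exp _).comp t hinner).congr_deriv (by ring)

lemma hasDerivAt_hardyNext (a : ℝ) {h : ℝ → ℝ} {h' t : ℝ} (ht : t ≠ 0)
    (hh : HasDerivAt h h' (exp (a - 1 / t))) :
    HasDerivAt (hardyNext a h)
      ((exp (a - 1 / t) * h' / t - h (exp (a - 1 / t))) / t ^ 2) t := by
  have hcomp := hh.comp t (hasDerivAt_exp_sub_one_div a ht)
  refine ((hcomp.div (hasDerivAt_id t) ht).sub_const (1 / 2)).congr_deriv ?_
  simp only [Function.comp_apply, id_eq]
  field_simp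

theorem recursion_identity_hardy_general (a δ : ℝ) (ha : 1 ≤ a) (hδ1 : δ < 1)
    (g g' : ℝ → ℝ)
    (hderiv : ∀ r ∈ Set.Ioo 0 δ, HasDerivAt g (g' r) r) :
    ∀ r ∈ Set.Ioo (0 : ℝ) δ,
      (r * g' r - g r ^ 2) / ((a - Real.log r)⁻¹) ^ 2 - 1 / 4
        = (a - Real.log r)⁻¹
            * deriv (fun t => g (Real.exp (a - 1 / t)) / t - 1 / 2) ((a - Real.log r)⁻¹)
          - (g r / (a - Real.log r)⁻¹ - 1 / 2) ^ 2 := by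
  intro r hr
  have hlog : log r < 0 := log_neg hr.1 (hr.2.trans hδ1)
  have ht : (a - log r)⁻¹ ≠ 0 := inv_ne_zero (by linarith)
  have hexp := exp_sub_one_div_inv_sub_log a hr.1
  have hg : HasDerivAt g (g' r) (exp (a - 1 / (a - log r)⁻¹)) := by
    rw [hexp]
    exact hderiv r hr
  have hnext := hasDerivAt_hardyNext a ht hg
  rw [show (fun t => g (exp (a - 1 / t)) / t - 1 / 2) = hardyNext a g from rfl, hnext.deriv,
    hexp]
  -- `t h_{k+1}'(t) = r g'(r)/t² - g(r)/t`, and `-g(r)/t` cancels the cross term of the square.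
  field_simp
  ring

/-- Recursion identity for the improved Hardy inequality: with t = X₁(r) = (a - log r)⁻¹
and h₂(t) := g(r)/t - 1/2 (i.e. g(r) = t (h₂(t) + 1/2)), one has
(r g'(r) - g(r)²)/t² - 1/4 = t h₂'(t) - h₂(t)². -/
theorem recursion_identity_hardy (a δ : ℝ) (ha : 1 ≤ a) (hδ0 : 0 < δ) (hδ1 : δ < 1)
    (g g' : ℝ → ℝ)
    (hderiv : ∀ r ∈ Set.Ioo 0 δ, HasDerivAt g (g' r) r) :
    ∀ r ∈ Set.Ioo (0 : ℝ) δ,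
      (r * g' r - g r ^ 2) / ((a - Real.log r)⁻¹) ^ 2 - 1 / 4
        = (a - Real.log r)⁻¹
            * deriv (fun t => g (Real.exp (a - 1 / t)) / t - 1 / 2) ((a - Real.log r)⁻¹)
          - (g r / (a - Real.log r)⁻¹ - 1 / 2) ^ 2 :=
  recursion_identity_hardy_general a δ ha hδ1 g g' hderiv
end

section
/- For d ≥ 3, the functions h(r) = (d−2)(1+r²)/(r² + C(d−2) r^d), C > 0, solve the ODE (1+r²) r h' + ((d−2) r² + d) h − r² h² = 0 on (0,∞). -/
/-!
Write `h = (d - 2)(1 + r²) / D` with `D = r² + c rᵈ`. Multiplying the equation by `D²` turns it into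
a polynomial identity in `r` and `rᵈ` that holds for every constant `c`, so it suffices that
`D = r² + C(d - 2) rᵈ` is positive on `(0, ∞)`.
-/

noncomputable def hardyProfile (d : ℕ) (c r : ℝ) : ℝ :=
  ((d : ℝ) - 2) * (1 + r ^ 2) / (r ^ 2 + c * r ^ d)

theorem hasDerivAt_hardyProfile (d : ℕ) (c : ℝ) {r : ℝ} (hD : r ^ 2 + c * r ^ d ≠ 0) :
    HasDerivAt (hardyProfile d c)
      ((((d : ℝ) - 2) * (2 * r) * (r ^ 2 + c * r ^ d)
          - ((d : ℝ) - 2) * (1 + r ^ 2) * (2 * r + c * (d * r ^ (d - 1))))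
        / (r ^ 2 + c * r ^ d) ^ 2) r := by
  have hnum : HasDerivAt (fun r : ℝ => ((d : ℝ) - 2) * (1 + r ^ 2))
      (((d : ℝ) - 2) * (2 * r)) r := by
    simpa using ((hasDerivAt_pow 2 r).const_add 1).const_mul ((d : ℝ) - 2)
  have hden : HasDerivAt (fun r : ℝ => r ^ 2 + c * r ^ d) (2 * r + c * (d * r ^ (d - 1))) r := by
    simpa using (hasDerivAt_pow 2 r).fun_add ((hasDerivAt_pow d r).const_mul c)
  exact hnum.div hden hD

theorem hardyProfile_ode (d : ℕ) (c : ℝ) {r : ℝ} (hD : r ^ 2 + c * r ^ d ≠ 0) :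
    (1 + r ^ 2) * r * deriv (hardyProfile d c) r
      + (((d : ℝ) - 2) * r ^ 2 + d) * hardyProfile d c r
      - r ^ 2 * hardyProfile d c r ^ 2 = 0 := by
  rw [(hasDerivAt_hardyProfile d c hD).deriv, hardyProfile]
  -- `r * r ^ (d - 1) = r ^ d` fails at `d = 0` (truncated subtraction).
  cases d with
  | zero =>
    field_simp
    ring
  | succ n =>
    rw [pow_succ] at hD
    rw [Nat.add_sub_cancel, pow_succ]
    push_cast
    field_simp
    ring

theorem sq_add_mul_sub_two_mul_pow_pos {d : ℕ} (hd : 2 ≤ d) {C r : ℝ} (hC : 0 ≤ C) (hr : 0 < r) :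
    0 < r ^ 2 + C * ((d : ℝ) - 2) * r ^ d := by
  have : (0 : ℝ) ≤ (d : ℝ) - 2 := sub_nonneg.mpr (by exact_mod_cast hd)
  positivity

/-- Explicit solutions of the Hardy–Poincaré ODE. -/
theorem hardy_poincare_ode_solution (d : ℕ) (hd : 3 ≤ d) (C : ℝ) (hC : 0 < C) :
    ∀ r : ℝ, 0 < r →
      (1 + r ^ 2) * r
          * deriv (fun r => ((d : ℝ) - 2) * (1 + r ^ 2)
              / (r ^ 2 + C * ((d : ℝ) - 2) * r ^ (d : ℕ))) r
        + (((d : ℝ) - 2) * r ^ 2 + (d : ℝ))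
          * (((d : ℝ) - 2) * (1 + r ^ 2) / (r ^ 2 + C * ((d : ℝ) - 2) * r ^ (d : ℕ)))
        - r ^ 2 * (((d : ℝ) - 2) * (1 + r ^ 2)
            / (r ^ 2 + C * ((d : ℝ) - 2) * r ^ (d : ℕ))) ^ 2 = 0 := by
  intro r hr
  exact hardyProfile_ode d (C * ((d : ℝ) - 2))
    (sq_add_mul_sub_two_mul_pow_pos (by omega) hC.le hr).ne'
end

section
/- Let X(t) = log(1−t)/(log(1−t) − 1) and δ(t) = −t/log(1−t) for t ∈ (0,1). If h₀(t) = t/2 + δ(t) h₁(X(t)) with h₁ C¹ on (0,1), then [ −t(1−t) h₀'(t) + h₀(t) − h₀(t)² − t²/4 ] / δ(t)² = − s(1−s) h₁'(s) + h₁(s) − h₁(s)² with s = X(t). -/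
open Real

/-!
Write `X t = log (1 - t) / (log (1 - t) - 1)` and `δ t = -t / log (1 - t)`. The identity holds for any
pair `(δ, X)` solving the two first-order equations `t (1 - t) X' = δ X (1 - X)` and
`(1 - t) (δ - t δ') = δ²`: with `h₀ = t/2 + δ · h₁ ∘ X`, the terms without `h₁` cancel, the first
equation turns the `h₁'` term into `-δ² X (1 - X) h₁'(X)` and the second turns the `h₁` terms into
`δ² (h₁ - h₁²)`. Both equations are direct computations from `d/dt log (1 - t) = -1/(1 - t)`.
-/

noncomputable def gaussX (t : ℝ) : ℝ := log (1 - t) / (log (1 - t) - 1)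

noncomputable def gaussDelta (t : ℝ) : ℝ := -t / log (1 - t)

theorem recursion_identity_of_hasDerivAt {δ X h₁ : ℝ → ℝ} {h₁' t : ℝ} (ht₀ : t ≠ 0) (ht₁ : 1 - t ≠ 0)
    (hδ₀ : δ t ≠ 0) (hδ : HasDerivAt δ ((δ t - δ t ^ 2 / (1 - t)) / t) t)
    (hX : HasDerivAt X (δ t * (X t * (1 - X t)) / (t * (1 - t))) t)
    (hh₁ : HasDerivAt h₁ h₁' (X t)) :
    (-t * (1 - t) * deriv (fun t => t / 2 + δ t * h₁ (X t)) t
        + (t / 2 + δ t * h₁ (X t)) - (t / 2 + δ t * h₁ (X t)) ^ 2 - t ^ 2 / 4) / δ t ^ 2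
      = -X t * (1 - X t) * h₁' + h₁ (X t) - h₁ (X t) ^ 2 := by
  have hh₀ : HasDerivAt (fun t => t / 2 + δ t * h₁ (X t))
      (1 / 2 + ((δ t - δ t ^ 2 / (1 - t)) / t * h₁ (X t)
        + δ t * (h₁' * (δ t * (X t * (1 - X t)) / (t * (1 - t)))))) t :=
    ((hasDerivAt_id t).div_const 2).add (hδ.mul (hh₁.comp t hX))
  rw [hh₀.deriv]
  field_simp
  ring

section
variable {t : ℝ}

theorem log_one_sub_neg (ht : t ∈ Set.Ioo (0 : ℝ) 1) : log (1 - t) < 0 :=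
  log_neg (by linarith [ht.2]) (by linarith [ht.1])

theorem gaussX_mem_Ioo (ht : t ∈ Set.Ioo (0 : ℝ) 1) : gaussX t ∈ Set.Ioo (0 : ℝ) 1 := by
  have hL := log_one_sub_neg ht
  exact ⟨div_pos_of_neg_of_neg hL (by linarith), (div_lt_one_of_neg (by linarith)).2 (by linarith)⟩

theorem gaussDelta_ne_zero (ht : t ∈ Set.Ioo (0 : ℝ) 1) : gaussDelta t ≠ 0 :=
  div_ne_zero (neg_ne_zero.2 ht.1.ne') (log_one_sub_neg ht).ne

theorem hasDerivAt_log_one_sub (ht : t < 1) :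
    HasDerivAt (fun u => log (1 - u)) (-1 / (1 - t)) t :=
  ((hasDerivAt_id t).const_sub 1).log (sub_pos.2 ht).ne'

theorem hasDerivAt_gaussX (ht : t ∈ Set.Ioo (0 : ℝ) 1) :
    HasDerivAt gaussX (gaussDelta t * (gaussX t * (1 - gaussX t)) / (t * (1 - t))) t := by
  have hL := log_one_sub_neg ht
  have hL' := hasDerivAt_log_one_sub ht.2
  refine (hL'.div (hL'.sub_const 1) (by linarith)).congr_deriv ?_
  have : log (1 - t) - 1 ≠ 0 := by linarith
  simp only [gaussX, gaussDelta]
  field_simp [ht.1.ne', (sub_pos.2 ht.2).ne', hL.ne]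
  ring

theorem hasDerivAt_gaussDelta (ht : t ∈ Set.Ioo (0 : ℝ) 1) :
    HasDerivAt gaussDelta ((gaussDelta t - gaussDelta t ^ 2 / (1 - t)) / t) t := by
  have hL := log_one_sub_neg ht
  refine ((hasDerivAt_neg t).div (hasDerivAt_log_one_sub ht.2) hL.ne).congr_deriv ?_
  simp only [gaussDelta]
  field_simp [ht.1.ne', (sub_pos.2 ht.2).ne', hL.ne]
end

/-- Key recursion identity for the improved gaussian Poincaré inequality (d ≥ 3):
with X(t) = log(1-t)/(log(1-t)-1), δ(t) = -t/log(1-t) and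
h₀(t) = t/2 + δ(t) h₁(X(t)). -/
theorem recursion_identity_gaussian
    (h₁ h₁' : ℝ → ℝ)
    (hderiv : ∀ s ∈ Set.Ioo (0 : ℝ) 1, HasDerivAt h₁ (h₁' s) s) :
    ∀ t ∈ Set.Ioo (0 : ℝ) 1,
      (-t * (1 - t)
            * deriv (fun t => t / 2
                + (-t / Real.log (1 - t))
                  * h₁ (Real.log (1 - t) / (Real.log (1 - t) - 1))) t
          + (t / 2 + (-t / Real.log (1 - t))
              * h₁ (Real.log (1 - t) / (Real.log (1 - t) - 1)))
          - (t / 2 + (-t / Real.log (1 - t))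
              * h₁ (Real.log (1 - t) / (Real.log (1 - t) - 1))) ^ 2
          - t ^ 2 / 4) / (-t / Real.log (1 - t)) ^ 2
        = -(Real.log (1 - t) / (Real.log (1 - t) - 1))
              * (1 - Real.log (1 - t) / (Real.log (1 - t) - 1))
              * h₁' (Real.log (1 - t) / (Real.log (1 - t) - 1))
          + h₁ (Real.log (1 - t) / (Real.log (1 - t) - 1))
          - h₁ (Real.log (1 - t) / (Real.log (1 - t) - 1)) ^ 2 := fun t ht =>
  recursion_identity_of_hasDerivAt (δ := gaussDelta) (X := gaussX) ht.1.ne' (sub_pos.2 ht.2).ne'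
    (gaussDelta_ne_zero ht) (hasDerivAt_gaussDelta ht) (hasDerivAt_gaussX ht)
    (hderiv _ (gaussX_mem_Ioo ht))
end

section
/- Let h : (r₀, ∞) → ℝ be C¹, positive, and satisfy r h'(r) − h(r)² ≥ ℓ > 0 for all r large. Then no such h exists; equivalently, if f(r) := r h'(r) − h(r)² converges to ℓ ≥ 0 as r → ∞ for some positive C¹ function h, then ℓ = 0. -/
/-!
Suppose `r h' - h² ≥ c > 0` for large `r`. In the variable `t = log r` this says `H' ≥ c + H²`
for `H(t) = h(eᵗ)`, so `arctan (H / √c)` grows at least at the rate `√c`. Back in `r`, the function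
`arctan (h r / √c) - √c log r` is nondecreasing, yet it is below `π / 2 - √c log r → -∞`.
-/

open Real Set Filter

section Riccati

variable {h h' : ℝ → ℝ} {a c : ℝ}

lemma monotoneOn_arctan_sub_log_of_riccati (ha : 0 ≤ a) (hc : 0 < c)
    (hderiv : ∀ r ∈ Ioi a, HasDerivAt h (h' r) r)
    (hric : ∀ r ∈ Ioi a, c ≤ r * h' r - h r ^ 2) :
    MonotoneOn (fun r => arctan (h r / √c) - √c * log r) (Ioi a) := by
  set s := √c
  have hs : 0 < s := sqrt_pos.mpr hc
  have hs2 : s ^ 2 = c := sq_sqrt hc.le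
  have hF : ∀ r ∈ Ioi a, HasDerivAt (fun r => arctan (h r / s) - s * log r)
      (1 / (1 + (h r / s) ^ 2) * (h' r / s) - s * r⁻¹) r := fun r hr =>
    ((hderiv r hr).div_const s).arctan.sub
      ((hasDerivAt_log (ha.trans_lt hr).ne').const_mul s)
  refine monotoneOn_of_hasDerivWithinAt_nonneg (convex_Ioi a)
    (fun r hr => (hF r hr).continuousAt.continuousWithinAt)
    (fun r hr => (hF r (interior_subset hr)).hasDerivWithinAt) fun r hr => ?_
  rw [interior_Ioi] at hr
  have hr0 : 0 < r := ha.trans_lt hr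
  have hden : 0 < s ^ 2 + h r ^ 2 := by positivity
  have hderiv_eq : 1 / (1 + (h r / s) ^ 2) * (h' r / s) - s * r⁻¹
      = s * (r * h' r - (s ^ 2 + h r ^ 2)) / (r * (s ^ 2 + h r ^ 2)) := by
    field_simp
  rw [hderiv_eq]
  have hric_r := hric r hr
  apply div_nonneg (mul_nonneg hs.le _) (by positivity)
  linarith

lemma riccati_ineq_not_global (ha : 0 ≤ a) (hc : 0 < c)
    (hderiv : ∀ r ∈ Ioi a, HasDerivAt h (h' r) r)
    (hric : ∀ r ∈ Ioi a, c ≤ r * h' r - h r ^ 2) : False := by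
  set F := fun r => arctan (h r / √c) - √c * log r
  have hmono := monotoneOn_arctan_sub_log_of_riccati ha hc hderiv hric
  have hbound : Tendsto (fun r => π / 2 + -(√c * log r)) atTop atBot :=
    tendsto_atBot_add_const_left _ _ <| tendsto_neg_atTop_atBot.comp <|
      tendsto_log_atTop.const_mul_atTop (sqrt_pos.mpr hc)
  obtain ⟨r, hr_lt, hr_gt⟩ :=
    ((hbound.eventually_lt_atBot (F (a + 1))).and (eventually_gt_atTop (a + 1))).exists
  have hFr : F (a + 1) ≤ F r :=
    hmono (mem_Ioi.mpr (by linarith)) (mem_Ioi.mpr (by linarith)) hr_gt.le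
  have harctan : arctan (h r / √c) < π / 2 := arctan_lt_pi_div_two _
  simp only [F] at hFr
  linarith

end Riccati

theorem zeroth_order_d2_general (r₀ : ℝ) (h h' : ℝ → ℝ)
    (hderiv : ∀ r ∈ Set.Ioi r₀, HasDerivAt h (h' r) r)
    (ℓ : ℝ) (hℓ : 0 ≤ ℓ)
    (hlim : Filter.Tendsto (fun r => r * h' r - h r ^ 2) Filter.atTop (nhds ℓ)) :
    ℓ = 0 := by
  by_contra hne
  have hℓpos : 0 < ℓ := hℓ.lt_of_ne' hne
  obtain ⟨R, hR⟩ := eventually_atTop.mp <| hlim.eventually (eventually_ge_nhds (half_lt_self hℓpos))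
  refine riccati_ineq_not_global (a := max R (max r₀ 0)) (c := ℓ / 2)
    (le_max_of_le_right (le_max_right _ _))
    (half_pos hℓpos) (fun r hr => hderiv r ?_) (fun r hr => hR r ?_)
  · exact (le_max_of_le_right (le_max_left _ _)).trans_lt (mem_Ioi.mp hr)
  · exact (le_max_left _ _).trans (mem_Ioi.mp hr).le

/-- For a positive C¹ function h on a half-line, if r h'(r) - h(r)² converges to
ℓ ≥ 0 as r → ∞, then ℓ = 0. -/
theorem zeroth_order_d2 (r₀ : ℝ) (h h' : ℝ → ℝ)
    (hderiv : ∀ r ∈ Set.Ioi r₀, HasDerivAt h (h' r) r)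
    (hcont : ContinuousOn h' (Set.Ioi r₀))
    (hpos : ∀ r ∈ Set.Ioi r₀, 0 < h r)
    (ℓ : ℝ) (hℓ : 0 ≤ ℓ)
    (hlim : Filter.Tendsto (fun r => r * h' r - h r ^ 2) Filter.atTop (nhds ℓ)) :
    ℓ = 0 :=
  zeroth_order_d2_general r₀ h h' hderiv ℓ hℓ hlim
end
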